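/- Context irrelevance in the Juliette calculus: for any world evaluation contexts C and C', global method tables M_g, M'_g, redex rdx, and expression e', the machine step ⟨M_g, C[rdx]⟩ → ⟨M'_g, C[e']⟩ holds if and only if ⟨M_g, C'[rdx]⟩ → ⟨M'_g, C'[e']⟩ holds. -/
import Mathlib


-- Values of the Juliette calculus: unit and generic-function values.
inductive Val : Type where
  | unit : Val
  | fn : ℕ → Val

-- Typed Juliette expressions and method definitions (method tables are lists
-- of method definitions, with the head of the list being the newest one).
mutual
inductive Expr (Ty : Type) : Type where
  | val : Val → Expr Ty
  | var : ℕ → Expr Ty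
  | seq : Expr Ty → Expr Ty → Expr Ty
  | primop : ℕ → List (Expr Ty) → Expr Ty
  | call : Expr Ty → List (Expr Ty) → Expr Ty
  | tcall : Expr Ty → List (Expr Ty) → List (MDef Ty) → Ty → Expr Ty
  | mdefE : MDef Ty → Expr Ty
  | global : Expr Ty → Expr Ty
  | intable : List (MDef Ty) → Expr Ty → Expr Ty
  | cast : Expr Ty → Ty → Expr Ty
  | inferred : Expr Ty → Expr Ty

inductive MDef (Ty : Type) : Type where
  | mk : ℕ → List (ℕ × Ty) → Option Ty → Expr Ty → MDef Ty
end

namespace MDef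
def mname {Ty : Type} : MDef Ty → ℕ | .mk n _ _ _ => n
def params {Ty : Type} : MDef Ty → List (ℕ × Ty) | .mk _ ps _ _ => ps
def retAnn {Ty : Type} : MDef Ty → Option Ty | .mk _ _ r _ => r
def body {Ty : Type} : MDef Ty → Expr Ty | .mk _ _ _ b => b
def argTys {Ty : Type} (md : MDef Ty) : List Ty := md.params.map Prod.snd
def paramNames {Ty : Type} (md : MDef Ty) : List ℕ := md.params.map Prod.fst
end MDef

-- Simple evaluation contexts X: they never contain global or table evaluation.
inductive SCtx (Ty : Type) : Type where
  | hole : SCtx Ty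
  | seq : SCtx Ty → Expr Ty → SCtx Ty
  | primop : ℕ → List Val → SCtx Ty → List (Expr Ty) → SCtx Ty
  | callF : SCtx Ty → List (Expr Ty) → SCtx Ty
  | callA : Val → List Val → SCtx Ty → List (Expr Ty) → SCtx Ty
  | tcallF : SCtx Ty → List (Expr Ty) → List (MDef Ty) → Ty → SCtx Ty
  | tcallA : Val → List Val → SCtx Ty → List (Expr Ty) → List (MDef Ty) → Ty → SCtx Ty

def SCtx.plug {Ty : Type} : SCtx Ty → Expr Ty → Expr Ty
  | .hole, e => e
  | .seq X e₂, e => .seq (X.plug e) e₂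
  | .primop l vs X es, e => .primop l (vs.map Expr.val ++ [X.plug e] ++ es)
  | .callF X es, e => .call (X.plug e) es
  | .callA v vs X es, e => .call (.val v) (vs.map Expr.val ++ [X.plug e] ++ es)
  | .tcallF X es M τ, e => .tcall (X.plug e) es M τ
  | .tcallA v vs X es M τ, e => .tcall (.val v) (vs.map Expr.val ++ [X.plug e] ++ es) M τ

-- World evaluation contexts C ::= X | X[⦇C⦈] | X[⟦C⟧_M].
inductive WCtx (Ty : Type) : Type where
  | simple : SCtx Ty → WCtx Ty
  | global : SCtx Ty → WCtx Ty → WCtx Ty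
  | intable : SCtx Ty → List (MDef Ty) → WCtx Ty → WCtx Ty

def WCtx.plug {Ty : Type} : WCtx Ty → Expr Ty → Expr Ty
  | .simple X, e => X.plug e
  | .global X C, e => X.plug (.global (C.plug e))
  | .intable X M C, e => X.plug (.intable M (C.plug e))

variable {Ty : Type}

-- Pointwise subtyping on annotation/tag vectors.
def subL (sub : Ty → Ty → Prop) : List Ty → List Ty → Prop := List.Forall₂ sub

-- Two method definitions are equivalent: same name, mutually subtyping annotations.
def MEquiv (sub : Ty → Ty → Prop) (md md' : MDef Ty) : Prop :=
  md.mname = md'.mname ∧ subL sub md.argTys md'.argTys ∧ subL sub md'.argTys md.argTys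

-- Membership in latest(M): in the table with no strictly newer equivalent definition.
def LatestMem (sub : Ty → Ty → Prop) (M : List (MDef Ty)) (md : MDef Ty) : Prop :=
  ∃ i : ℕ, M[i]? = some md ∧
    ∀ j : ℕ, j < i → ∀ md', M[j]? = some md' → ¬ MEquiv sub md md'

-- getmd(M, m, σ̄) = min(applicable(latest(M), m, σ̄)).
def GetMd (sub : Ty → Ty → Prop) (M : List (MDef Ty)) (m : ℕ)
    (σs : List Ty) (md : MDef Ty) : Prop :=
  LatestMem sub M md ∧ md.mname = m ∧ subL sub σs md.argTys ∧
    ∀ md', LatestMem sub M md' → md'.mname = m → subL sub σs md'.argTys →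
      subL sub md.argTys md'.argTys

section Semantics
variable (sub : Ty → Ty → Prop) (typeof : Val → Ty)
  (Δ : ℕ → List Val → Option Val)
  (substF : Expr Ty → List ℕ → List Val → Expr Ty)

-- Small-step semantics of typed Juliette on states ⟨M_g, e⟩; the global method
-- table only changes via method definition (E-MD). substF is capture-avoiding
-- substitution of values for the method's parameters.
inductive Step : List (MDef Ty) → Expr Ty → List (MDef Ty) → Expr Ty → Prop where
  | seqS (Mg : List (MDef Ty)) (C : WCtx Ty) (v : Val) (e : Expr Ty) :
      Step Mg (C.plug (.seq (.val v) e)) Mg (C.plug e)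
  | primopS (Mg : List (MDef Ty)) (C : WCtx Ty) (l : ℕ) (vs : List Val) (v' : Val) :
      Δ l vs = some v' →
      Step Mg (C.plug (.primop l (vs.map Expr.val))) Mg (C.plug (.val v'))
  | mdefS (Mg : List (MDef Ty)) (C : WCtx Ty) (md : MDef Ty) :
      Step Mg (C.plug (.mdefE md)) (md :: Mg) (C.plug (.val (.fn md.mname)))
  | callGlobalS (Mg : List (MDef Ty)) (C : WCtx Ty) (X : SCtx Ty) (m : ℕ) (vs : List Val) :
      Step Mg (C.plug (.global (X.plug (.call (.val (.fn m)) (vs.map Expr.val)))))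
           Mg (C.plug (.global (X.plug (.intable Mg (.call (.val (.fn m)) (vs.map Expr.val))))))
  | callLocalS (Mg : List (MDef Ty)) (C : WCtx Ty) (M' : List (MDef Ty)) (X : SCtx Ty)
      (m : ℕ) (vs : List Val) (md : MDef Ty) :
      GetMd sub M' m (vs.map typeof) md →
      Step Mg (C.plug (.intable M' (X.plug (.call (.val (.fn m)) (vs.map Expr.val)))))
           Mg (C.plug (.intable M' (X.plug (substF md.body md.paramNames vs))))
  | valGlobalS (Mg : List (MDef Ty)) (C : WCtx Ty) (v : Val) :
      Step Mg (C.plug (.global (.val v))) Mg (C.plug (.val v))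
  | valLocalS (Mg : List (MDef Ty)) (C : WCtx Ty) (M' : List (MDef Ty)) (v : Val) :
      Step Mg (C.plug (.intable M' (.val v))) Mg (C.plug (.val v))
  | tcallGlobalS (Mg : List (MDef Ty)) (C : WCtx Ty) (X : SCtx Ty) (m : ℕ)
      (vs : List Val) (M' : List (MDef Ty)) (τ : Ty) :
      Step Mg (C.plug (.global (X.plug (.tcall (.val (.fn m)) (vs.map Expr.val) M' τ))))
           Mg (C.plug (.intable Mg (X.plug (.tcall (.val (.fn m)) (vs.map Expr.val) M' τ))))
  | tcallInferredLocalS (Mg : List (MDef Ty)) (C : WCtx Ty) (M' : List (MDef Ty))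
      (X : SCtx Ty) (m : ℕ) (vs : List Val) (md : MDef Ty) (τr : Ty) :
      GetMd sub M' m (vs.map typeof) md →
      Step Mg (C.plug (.intable M' (X.plug (.tcall (.val (.fn m)) (vs.map Expr.val) M' τr))))
           Mg (C.plug (.intable M' (X.plug (.inferred (substF md.body md.paramNames vs)))))
  | tcallCheckedLocalS (Mg : List (MDef Ty)) (C : WCtx Ty) (M' Mext : List (MDef Ty))
      (X : SCtx Ty) (m : ℕ) (vs : List Val) (md : MDef Ty) (τr : Ty) :
      GetMd sub M' m (vs.map typeof) md →
      Step Mg (C.plug (.intable M' (X.plug (.tcall (.val (.fn m)) (vs.map Expr.val) (Mext ++ M') τr))))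
           Mg (C.plug (.intable M' (X.plug (.cast (substF md.body md.paramNames vs) τr))))
  | valCheckedS (Mg : List (MDef Ty)) (C : WCtx Ty) (v : Val) (τ : Ty) :
      sub (typeof v) τ →
      Step Mg (C.plug (.cast (.val v) τ)) Mg (C.plug (.val v))
  | valInferredS (Mg : List (MDef Ty)) (C : WCtx Ty) (v : Val) :
      Step Mg (C.plug (.inferred (.val v))) Mg (C.plug (.val v))

-- Error steps ⟨M_g, e⟩ → error.
inductive StepErr : List (MDef Ty) → Expr Ty → Prop where
  | varErr (Mg : List (MDef Ty)) (C : WCtx Ty) (x : ℕ) :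
      StepErr Mg (C.plug (.var x))
  | primopErr (Mg : List (MDef Ty)) (C : WCtx Ty) (l : ℕ) (vs : List Val) :
      Δ l vs = none → StepErr Mg (C.plug (.primop l (vs.map Expr.val)))
  | calleeErr (Mg : List (MDef Ty)) (C : WCtx Ty) (v : Val) (vs : List Val) :
      (∀ m : ℕ, v ≠ .fn m) →
      StepErr Mg (C.plug (.call (.val v) (vs.map Expr.val)))
  | callErr (Mg : List (MDef Ty)) (C : WCtx Ty) (M' : List (MDef Ty)) (X : SCtx Ty)
      (m : ℕ) (vs : List Val) :
      (∀ md : MDef Ty, ¬ GetMd sub M' m (vs.map typeof) md) →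
      StepErr Mg (C.plug (.intable M' (X.plug (.call (.val (.fn m)) (vs.map Expr.val)))))
  | typeErr (Mg : List (MDef Ty)) (C : WCtx Ty) (v : Val) (τ : Ty) :
      ¬ sub (typeof v) τ → StepErr Mg (C.plug (.cast (.val v) τ))

end Semantics

-- Redexes: immediately reducible expressions with no reducible subexpressions.
inductive IsRedex {Ty : Type} : Expr Ty → Prop where
  | varR (x : ℕ) : IsRedex (.var x)
  | seqR (v : Val) (e : Expr Ty) : IsRedex (.seq (.val v) e)
  | castR (v : Val) (τ : Ty) : IsRedex (.cast (.val v) τ)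
  | inferredR (v : Val) : IsRedex (.inferred (.val v))
  | nonFnCallR (v : Val) (vs : List Val) :
      (∀ m : ℕ, v ≠ .fn m) → IsRedex (.call (.val v) (vs.map Expr.val))
  | mdefR (md : MDef Ty) : IsRedex (.mdefE md)
  | primopR (l : ℕ) (vs : List Val) : IsRedex (.primop l (vs.map Expr.val))
  | valGlobalR (v : Val) : IsRedex (.global (.val v))
  | valTableR (M : List (MDef Ty)) (v : Val) : IsRedex (.intable M (.val v))
  | callGlobalR (X : SCtx Ty) (m : ℕ) (vs : List Val) :
      IsRedex (.global (X.plug (.call (.val (.fn m)) (vs.map Expr.val))))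
  | callTableR (M : List (MDef Ty)) (X : SCtx Ty) (m : ℕ) (vs : List Val) :
      IsRedex (.intable M (X.plug (.call (.val (.fn m)) (vs.map Expr.val))))
  | tcallGlobalR (X : SCtx Ty) (m : ℕ) (vs : List Val) (M' : List (MDef Ty)) (τ : Ty) :
      IsRedex (.global (X.plug (.tcall (.val (.fn m)) (vs.map Expr.val) M' τ)))
  | tcallTableR (M : List (MDef Ty)) (X : SCtx Ty) (m : ℕ) (vs : List Val)
      (M' : List (MDef Ty)) (τ : Ty) :
      IsRedex (.intable M (X.plug (.tcall (.val (.fn m)) (vs.map Expr.val) M' τ)))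
section Aux
variable {Ty : Type}

/-- Shapes that can sit at the hole of a simple context and force unique
decomposition: non-values whose head constructor is never produced by a
simple context, or value-headed `seq`/`primop`/`call`/`tcall`. -/
inductive Atom : Expr Ty → Prop where
  | var (x : ℕ) : Atom (.var x)
  | seq (v : Val) (e : Expr Ty) : Atom (.seq (.val v) e)
  | primop (l : ℕ) (vs : List Val) : Atom (.primop l (vs.map Expr.val))
  | call (v : Val) (vs : List Val) : Atom (.call (.val v) (vs.map Expr.val))
  | tcall (v : Val) (vs : List Val) (M : List (MDef Ty)) (τ : Ty) :
      Atom (.tcall (.val v) (vs.map Expr.val) M τ)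
  | mdefE (md : MDef Ty) : Atom (.mdefE md)
  | global (e : Expr Ty) : Atom (.global e)
  | intable (M : List (MDef Ty)) (e : Expr Ty) : Atom (.intable M e)
  | cast (e : Expr Ty) (τ : Ty) : Atom (.cast e τ)
  | inferred (e : Expr Ty) : Atom (.inferred e)

lemma IsRedex.atom {a : Expr Ty} (h : IsRedex a) : Atom a := by
  cases h <;> constructor

lemma Atom.ne_val {a : Expr Ty} (h : Atom a) (v : Val) : a ≠ .val v := by
  cases h <;> intro hc <;> cases hc

lemma plug_ne_val {a : Expr Ty} (h : Atom a) (X : SCtx Ty) (v : Val) :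
    X.plug a ≠ .val v := by
  cases X <;> simp only [SCtx.plug] <;> intro hc <;> first
    | exact h.ne_val v hc
    | cases hc

lemma not_val_append {vs vs' : List Val} {x : Expr Ty} {es : List (Expr Ty)}
    (hx : ∀ v, x ≠ .val v) :
    vs.map Expr.val ++ x :: es ≠ vs'.map Expr.val := by
  intro h
  have hm : x ∈ vs'.map Expr.val := by rw [← h]; simp
  obtain ⟨v, _, hv⟩ := List.mem_map.1 hm
  exact hx v hv.symm

lemma map_val_mid {x y : Expr Ty} : ∀ {l₁ l₂ : List Val} {r₁ r₂ : List (Expr Ty)},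
    (∀ v, x ≠ Expr.val v) → (∀ v, y ≠ Expr.val v) →
    l₁.map Expr.val ++ x :: r₁ = l₂.map Expr.val ++ y :: r₂ →
    l₁ = l₂ ∧ x = y ∧ r₁ = r₂ := by
  intro l₁
  induction l₁ with
  | nil =>
    intro l₂ r₁ r₂ hx hy h
    cases l₂ with
    | nil => simpa using h
    | cons b bs =>
      simp only [List.map_nil, List.nil_append, List.map_cons, List.cons_append,
        List.cons.injEq] at h
      exact absurd h.1 (hx b)
  | cons a as ih =>
    intro l₂ r₁ r₂ hx hy h
    cases l₂ with
    | nil =>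
      simp only [List.map_nil, List.nil_append, List.map_cons, List.cons_append,
        List.cons.injEq] at h
      exact absurd h.1.symm (hy a)
    | cons b bs =>
      simp only [List.map_cons, List.cons_append, List.cons.injEq] at h
      obtain ⟨hab, h2⟩ := h
      obtain ⟨h3, h4, h5⟩ := ih hx hy h2
      injection hab with hab
      exact ⟨by rw [hab, h3], h4, h5⟩

/-- If an atom equals a simple context plugged with an atom, the context is
the hole. -/
lemma atom_plug_hole {X' : SCtx Ty} {a b : Expr Ty} (ha : Atom a) (hb : Atom b)
    (h : a = X'.plug b) : X' = .hole ∧ b = a := by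
  cases X' with
  | hole => exact ⟨rfl, h.symm⟩
  | seq X₁ e₂ =>
    simp only [SCtx.plug] at h
    cases ha <;> try exact absurd h (by intro hc; cases hc)
    case seq v e =>
      injection h with h1 h2
      exact absurd h1.symm (plug_ne_val hb X₁ v)
  | primop l' vs' X₁ es =>
    simp only [SCtx.plug] at h
    cases ha <;> try exact absurd h (by intro hc; cases hc)
    case primop l vs =>
      injection h with h1 h2
      exact absurd (by simpa using h2.symm) (not_val_append (plug_ne_val hb X₁))
  | callF X₁ es =>
    simp only [SCtx.plug] at h
    cases ha <;> try exact absurd h (by intro hc; cases hc)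
    case call v vs =>
      injection h with h1 h2
      exact absurd h1.symm (plug_ne_val hb X₁ v)
  | callA v' vs' X₁ es =>
    simp only [SCtx.plug] at h
    cases ha <;> try exact absurd h (by intro hc; cases hc)
    case call v vs =>
      injection h with h1 h2
      exact absurd (by simpa using h2.symm) (not_val_append (plug_ne_val hb X₁))
  | tcallF X₁ es M τ =>
    simp only [SCtx.plug] at h
    cases ha <;> try exact absurd h (by intro hc; cases hc)
    case tcall v vs M' τ' =>
      injection h with h1 h2
      exact absurd h1.symm (plug_ne_val hb X₁ v)
  | tcallA v' vs' X₁ es M τ =>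
    simp only [SCtx.plug] at h
    cases ha <;> try exact absurd h (by intro hc; cases hc)
    case tcall v vs M' τ' =>
      injection h with h1 h2
      exact absurd (by simpa using h2.symm) (not_val_append (plug_ne_val hb X₁))

lemma sctx_unique : ∀ (X X' : SCtx Ty) (a b : Expr Ty), Atom a → Atom b →
    X.plug a = X'.plug b → X = X' ∧ a = b := by
  intro X
  induction X with
  | hole =>
    intro X' a b ha hb h
    obtain ⟨h1, h2⟩ := atom_plug_hole ha hb h
    exact ⟨h1.symm, h2.symm⟩
  | seq X₁ e₂ ih =>
    intro X' a b ha hb h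
    cases X' with
    | hole =>
      obtain ⟨h1, h2⟩ := atom_plug_hole hb ha h.symm
      cases h1
    | seq X₁' e₂' =>
      simp only [SCtx.plug] at h
      injection h with h1 h2
      obtain ⟨h3, h4⟩ := ih X₁' a b ha hb h1
      exact ⟨by rw [h3, h2], h4⟩
    | primop l vs X₁' es => cases h
    | callF X₁' es => cases h
    | callA v vs X₁' es => cases h
    | tcallF X₁' es M τ => cases h
    | tcallA v vs X₁' es M τ => cases h
  | primop l vs X₁ es ih =>
    intro X' a b ha hb h
    cases X' with
    | hole =>
      obtain ⟨h1, h2⟩ := atom_plug_hole hb ha h.symm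
      cases h1
    | primop l' vs' X₁' es' =>
      simp only [SCtx.plug] at h
      injection h with h1 h2
      simp only [List.append_assoc, List.singleton_append] at h2
      obtain ⟨h3, h4, h5⟩ := map_val_mid (plug_ne_val ha X₁) (plug_ne_val hb X₁') h2
      obtain ⟨h6, h7⟩ := ih X₁' a b ha hb h4
      exact ⟨by rw [h1, h3, h5, h6], h7⟩
    | seq X₁' e₂' => cases h
    | callF X₁' es' => cases h
    | callA v vs' X₁' es' => cases h
    | tcallF X₁' es' M τ => cases h
    | tcallA v vs' X₁' es' M τ => cases h
  | callF X₁ es ih =>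
    intro X' a b ha hb h
    cases X' with
    | hole =>
      obtain ⟨h1, h2⟩ := atom_plug_hole hb ha h.symm
      cases h1
    | callF X₁' es' =>
      simp only [SCtx.plug] at h
      injection h with h1 h2
      obtain ⟨h3, h4⟩ := ih X₁' a b ha hb h1
      exact ⟨by rw [h3, h2], h4⟩
    | callA v vs' X₁' es' =>
      simp only [SCtx.plug] at h
      injection h with h1 h2
      exact absurd h1 (plug_ne_val ha X₁ v)
    | seq X₁' e₂' => cases h
    | primop l vs' X₁' es' => cases h
    | tcallF X₁' es' M τ => cases h
    | tcallA v vs' X₁' es' M τ => cases h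
  | callA v vs X₁ es ih =>
    intro X' a b ha hb h
    cases X' with
    | hole =>
      obtain ⟨h1, h2⟩ := atom_plug_hole hb ha h.symm
      cases h1
    | callF X₁' es' =>
      simp only [SCtx.plug] at h
      injection h with h1 h2
      exact absurd h1.symm (plug_ne_val hb X₁' v)
    | callA v' vs' X₁' es' =>
      simp only [SCtx.plug] at h
      injection h with h1 h2
      injection h1 with h1
      simp only [List.append_assoc, List.singleton_append] at h2
      obtain ⟨h3, h4, h5⟩ := map_val_mid (plug_ne_val ha X₁) (plug_ne_val hb X₁') h2
      obtain ⟨h6, h7⟩ := ih X₁' a b ha hb h4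
      exact ⟨by rw [h1, h3, h5, h6], h7⟩
    | seq X₁' e₂' => cases h
    | primop l vs' X₁' es' => cases h
    | tcallF X₁' es' M τ => cases h
    | tcallA v' vs' X₁' es' M τ => cases h
  | tcallF X₁ es M τ ih =>
    intro X' a b ha hb h
    cases X' with
    | hole =>
      obtain ⟨h1, h2⟩ := atom_plug_hole hb ha h.symm
      cases h1
    | tcallF X₁' es' M' τ' =>
      simp only [SCtx.plug] at h
      injection h with h1 h2 h3 h4
      obtain ⟨h5, h6⟩ := ih X₁' a b ha hb h1
      exact ⟨by rw [h5, h2, h3, h4], h6⟩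
    | tcallA v vs' X₁' es' M' τ' =>
      simp only [SCtx.plug] at h
      injection h with h1 h2
      exact absurd h1 (plug_ne_val ha X₁ v)
    | seq X₁' e₂' => cases h
    | primop l vs' X₁' es' => cases h
    | callF X₁' es' => cases h
    | callA v vs' X₁' es' => cases h
  | tcallA v vs X₁ es M τ ih =>
    intro X' a b ha hb h
    cases X' with
    | hole =>
      obtain ⟨h1, h2⟩ := atom_plug_hole hb ha h.symm
      cases h1
    | tcallF X₁' es' M' τ' =>
      simp only [SCtx.plug] at h
      injection h with h1 h2
      exact absurd h1.symm (plug_ne_val hb X₁' v)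
    | tcallA v' vs' X₁' es' M' τ' =>
      simp only [SCtx.plug] at h
      injection h with h1 h2 h3 h4
      injection h1 with h1
      simp only [List.append_assoc, List.singleton_append] at h2
      obtain ⟨h5, h6, h7⟩ := map_val_mid (plug_ne_val ha X₁) (plug_ne_val hb X₁') h2
      obtain ⟨h8, h9⟩ := ih X₁' a b ha hb h6
      exact ⟨by rw [h1, h5, h7, h8, h3, h4], h9⟩
    | seq X₁' e₂' => cases h
    | primop l vs' X₁' es' => cases h
    | callF X₁' es' => cases h
    | callA v' vs' X₁' es' => cases h

end Aux
section Aux2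
variable {Ty : Type}

lemma wplug_ne_val {a : Expr Ty} (h : Atom a) (C : WCtx Ty) (v : Val) :
    C.plug a ≠ .val v := by
  cases C with
  | simple X => exact plug_ne_val h X v
  | global X C => exact plug_ne_val (Atom.global _) X v
  | intable X M C => exact plug_ne_val (Atom.intable _ _) X v

lemma call_fn_not_redex {m : ℕ} {vs : List Val} :
    ∀ {e : Expr Ty}, IsRedex e →
      e = .call (.val (.fn m)) (vs.map Expr.val) → False := by
  intro e h
  cases h with
  | nonFnCallR v vs' hv =>
    intro he
    injection he with h1 h2
    injection h1 with h1
    exact hv m h1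
  | varR x => intro he; cases he
  | seqR v e => intro he; cases he
  | castR v τ => intro he; cases he
  | inferredR v => intro he; cases he
  | mdefR md => intro he; cases he
  | primopR l vs' => intro he; cases he
  | valGlobalR v => intro he; cases he
  | valTableR M v => intro he; cases he
  | callGlobalR X m' vs' => intro he; cases he
  | callTableR M X m' vs' => intro he; cases he
  | tcallGlobalR X m' vs' M' τ => intro he; cases he
  | tcallTableR M X m' vs' M' τ => intro he; cases he

lemma tcall_fn_not_redex {m : ℕ} {vs : List Val} {M' : List (MDef Ty)} {τ : Ty} :
    ∀ {e : Expr Ty}, IsRedex e →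
      e = .tcall (.val (.fn m)) (vs.map Expr.val) M' τ → False := by
  intro e h
  cases h <;> intro he <;> cases he

lemma no_call_decomp (D : WCtx Ty) (X₀ : SCtx Ty) {b : Expr Ty} (hb : IsRedex b)
    {m : ℕ} {vs : List Val} :
    D.plug b ≠ X₀.plug (.call (.val (.fn m)) (vs.map Expr.val)) := by
  intro h
  cases D with
  | simple X₁ =>
    obtain ⟨_, hbe⟩ := sctx_unique X₁ X₀ _ _ hb.atom (Atom.call _ _) h
    exact call_fn_not_redex hb hbe
  | global X₁ D₁ =>
    obtain ⟨_, hbe⟩ := sctx_unique X₁ X₀ _ _ (Atom.global _) (Atom.call _ _) h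
    cases hbe
  | intable X₁ M D₁ =>
    obtain ⟨_, hbe⟩ := sctx_unique X₁ X₀ _ _ (Atom.intable _ _) (Atom.call _ _) h
    cases hbe

lemma no_tcall_decomp (D : WCtx Ty) (X₀ : SCtx Ty) {b : Expr Ty} (hb : IsRedex b)
    {m : ℕ} {vs : List Val} {M' : List (MDef Ty)} {τ : Ty} :
    D.plug b ≠ X₀.plug (.tcall (.val (.fn m)) (vs.map Expr.val) M' τ) := by
  intro h
  cases D with
  | simple X₁ =>
    obtain ⟨_, hbe⟩ := sctx_unique X₁ X₀ _ _ hb.atom (Atom.tcall _ _ _ _) h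
    exact tcall_fn_not_redex hb hbe
  | global X₁ D₁ =>
    obtain ⟨_, hbe⟩ := sctx_unique X₁ X₀ _ _ (Atom.global _) (Atom.tcall _ _ _ _) h
    cases hbe
  | intable X₁ M D₁ =>
    obtain ⟨_, hbe⟩ := sctx_unique X₁ X₀ _ _ (Atom.intable _ _) (Atom.tcall _ _ _ _) h
    cases hbe

lemma redex_ne_global {a b : Expr Ty} (ha : IsRedex a) (D₀ : WCtx Ty)
    (hb : IsRedex b) : a ≠ .global (D₀.plug b) := by
  cases ha with
  | valGlobalR v =>
    intro h; injection h with h1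
    exact wplug_ne_val hb.atom D₀ v h1.symm
  | callGlobalR X m vs =>
    intro h; injection h with h1
    exact no_call_decomp D₀ X hb h1.symm
  | tcallGlobalR X m vs M' τ =>
    intro h; injection h with h1
    exact no_tcall_decomp D₀ X hb h1.symm
  | varR x => intro h; cases h
  | seqR v e => intro h; cases h
  | castR v τ => intro h; cases h
  | inferredR v => intro h; cases h
  | nonFnCallR v vs hv => intro h; cases h
  | mdefR md => intro h; cases h
  | primopR l vs => intro h; cases h
  | valTableR M v => intro h; cases h
  | callTableR M X m vs => intro h; cases h
  | tcallTableR M X m vs M' τ => intro h; cases h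

lemma redex_ne_intable {a b : Expr Ty} (ha : IsRedex a) (M : List (MDef Ty))
    (D₀ : WCtx Ty) (hb : IsRedex b) : a ≠ .intable M (D₀.plug b) := by
  cases ha with
  | valTableR M' v =>
    intro h; injection h with h0 h1
    exact wplug_ne_val hb.atom D₀ v h1.symm
  | callTableR M' X m vs =>
    intro h; injection h with h0 h1
    exact no_call_decomp D₀ X hb h1.symm
  | tcallTableR M' X m vs M'' τ =>
    intro h; injection h with h0 h1
    exact no_tcall_decomp D₀ X hb h1.symm
  | varR x => intro h; cases h
  | seqR v e => intro h; cases h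
  | castR v τ => intro h; cases h
  | inferredR v => intro h; cases h
  | nonFnCallR v vs hv => intro h; cases h
  | mdefR md => intro h; cases h
  | primopR l vs => intro h; cases h
  | valGlobalR v => intro h; cases h
  | callGlobalR X m vs => intro h; cases h
  | tcallGlobalR X m vs M' τ => intro h; cases h

lemma wctx_unique : ∀ (C D : WCtx Ty) (a b : Expr Ty), IsRedex a → IsRedex b →
    C.plug a = D.plug b → C = D ∧ a = b := by
  intro C
  induction C with
  | simple X =>
    intro D a b ha hb h
    cases D with
    | simple X' =>
      obtain ⟨h1, h2⟩ := sctx_unique X X' a b ha.atom hb.atom h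
      exact ⟨by rw [h1], h2⟩
    | global X' D₀ =>
      obtain ⟨h1, h2⟩ := sctx_unique X X' _ _ ha.atom (Atom.global _) h
      exact absurd h2 (redex_ne_global ha D₀ hb)
    | intable X' M D₀ =>
      obtain ⟨h1, h2⟩ := sctx_unique X X' _ _ ha.atom (Atom.intable _ _) h
      exact absurd h2 (redex_ne_intable ha M D₀ hb)
  | global X C₀ ih =>
    intro D a b ha hb h
    cases D with
    | simple X' =>
      obtain ⟨h1, h2⟩ := sctx_unique X X' _ _ (Atom.global _) hb.atom h
      exact absurd h2.symm (redex_ne_global hb C₀ ha)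
    | global X' D₀ =>
      obtain ⟨h1, h2⟩ := sctx_unique X X' _ _ (Atom.global _) (Atom.global _) h
      injection h2 with h2
      obtain ⟨h3, h4⟩ := ih D₀ a b ha hb h2
      exact ⟨by rw [h1, h3], h4⟩
    | intable X' M D₀ =>
      obtain ⟨h1, h2⟩ := sctx_unique X X' _ _ (Atom.global _) (Atom.intable _ _) h
      cases h2
  | intable X M C₀ ih =>
    intro D a b ha hb h
    cases D with
    | simple X' =>
      obtain ⟨h1, h2⟩ := sctx_unique X X' _ _ (Atom.intable _ _) hb.atom h
      exact absurd h2.symm (redex_ne_intable hb M C₀ ha)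
    | global X' D₀ =>
      obtain ⟨h1, h2⟩ := sctx_unique X X' _ _ (Atom.intable _ _) (Atom.global _) h
      cases h2
    | intable X' M' D₀ =>
      obtain ⟨h1, h2⟩ := sctx_unique X X' _ _ (Atom.intable _ _) (Atom.intable _ _) h
      injection h2 with h2a h2b
      obtain ⟨h3, h4⟩ := ih D₀ a b ha hb h2b
      exact ⟨by rw [h1, h2a, h3], h4⟩
  
lemma sctx_plug_inj : ∀ (X : SCtx Ty) (e₁ e₂ : Expr Ty),
    X.plug e₁ = X.plug e₂ → e₁ = e₂ := by
  intro X
  induction X with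
  | hole => exact fun _ _ h => h
  | seq X₁ e ih =>
    intro e₁ e₂ h
    simp only [SCtx.plug] at h
    injection h with h1
    exact ih _ _ h1
  | primop l vs X₁ es ih =>
    intro e₁ e₂ h
    simp only [SCtx.plug, List.append_assoc, List.singleton_append] at h
    injection h with h1 h2
    have h3 := List.append_cancel_left h2
    injection h3 with h3
    exact ih _ _ h3
  | callF X₁ es ih =>
    intro e₁ e₂ h
    simp only [SCtx.plug] at h
    injection h with h1
    exact ih _ _ h1
  | callA v vs X₁ es ih =>
    intro e₁ e₂ h
    simp only [SCtx.plug, List.append_assoc, List.singleton_append] at h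
    injection h with h1 h2
    have h3 := List.append_cancel_left h2
    injection h3 with h3
    exact ih _ _ h3
  | tcallF X₁ es M τ ih =>
    intro e₁ e₂ h
    simp only [SCtx.plug] at h
    injection h with h1
    exact ih _ _ h1
  | tcallA v vs X₁ es M τ ih =>
    intro e₁ e₂ h
    simp only [SCtx.plug, List.append_assoc, List.singleton_append] at h
    injection h with h1 h2
    have h3 := List.append_cancel_left h2
    injection h3 with h3
    exact ih _ _ h3

lemma wctx_plug_inj : ∀ (C : WCtx Ty) (e₁ e₂ : Expr Ty),
    C.plug e₁ = C.plug e₂ → e₁ = e₂ := by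
  intro C
  induction C with
  | simple X => exact sctx_plug_inj X
  | global X C₀ ih =>
    intro e₁ e₂ h
    have h1 := sctx_plug_inj X _ _ h
    injection h1 with h1
    exact ih _ _ h1
  | intable X M C₀ ih =>
    intro e₁ e₂ h
    have h1 := sctx_plug_inj X _ _ h
    injection h1 with h1 h2
    exact ih _ _ h2

end Aux2
lemma step_mp {Ty : Type} (sub : Ty → Ty → Prop) (typeof : Val → Ty)
    (Δ : ℕ → List Val → Option Val) (substF : Expr Ty → List ℕ → List Val → Expr Ty)
    (C C' : WCtx Ty) (Mg Mg' : List (MDef Ty)) (rdx e' : Expr Ty)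
    (hrdx : IsRedex rdx)
    (h : Step sub typeof Δ substF Mg (C.plug rdx) Mg' (C.plug e')) :
    Step sub typeof Δ substF Mg (C'.plug rdx) Mg' (C'.plug e') := by
  generalize hL : C.plug rdx = L at h
  generalize hR : C.plug e' = R at h
  cases h with
  | seqS D v e =>
    obtain ⟨hCD, hr⟩ := wctx_unique C D _ _ hrdx (IsRedex.seqR v e) hL
    subst hCD
    have he := wctx_plug_inj _ _ _ hR
    subst hr; subst he
    exact Step.seqS Mg C' v e'
  | primopS D l vs v' hΔ =>
    obtain ⟨hCD, hr⟩ := wctx_unique C D _ _ hrdx (IsRedex.primopR l vs) hL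
    subst hCD
    have he := wctx_plug_inj _ _ _ hR
    subst hr; subst he
    exact Step.primopS Mg C' l vs v' hΔ
  | mdefS D md =>
    obtain ⟨hCD, hr⟩ := wctx_unique C D _ _ hrdx (IsRedex.mdefR md) hL
    subst hCD
    have he := wctx_plug_inj _ _ _ hR
    subst hr; subst he
    exact Step.mdefS Mg C' md
  | callGlobalS D X m vs =>
    obtain ⟨hCD, hr⟩ := wctx_unique C D _ _ hrdx (IsRedex.callGlobalR X m vs) hL
    subst hCD
    have he := wctx_plug_inj _ _ _ hR
    subst hr; subst he
    exact Step.callGlobalS Mg C' X m vs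
  | callLocalS D M' X m vs md hmd =>
    obtain ⟨hCD, hr⟩ := wctx_unique C D _ _ hrdx (IsRedex.callTableR M' X m vs) hL
    subst hCD
    have he := wctx_plug_inj _ _ _ hR
    subst hr; subst he
    exact Step.callLocalS Mg C' M' X m vs md hmd
  | valGlobalS D v =>
    obtain ⟨hCD, hr⟩ := wctx_unique C D _ _ hrdx (IsRedex.valGlobalR v) hL
    subst hCD
    have he := wctx_plug_inj _ _ _ hR
    subst hr; subst he
    exact Step.valGlobalS Mg C' v
  | valLocalS D M' v =>
    obtain ⟨hCD, hr⟩ := wctx_unique C D _ _ hrdx (IsRedex.valTableR M' v) hL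
    subst hCD
    have he := wctx_plug_inj _ _ _ hR
    subst hr; subst he
    exact Step.valLocalS Mg C' M' v
  | tcallGlobalS D X m vs M' τ =>
    obtain ⟨hCD, hr⟩ := wctx_unique C D _ _ hrdx (IsRedex.tcallGlobalR X m vs M' τ) hL
    subst hCD
    have he := wctx_plug_inj _ _ _ hR
    subst hr; subst he
    exact Step.tcallGlobalS Mg C' X m vs M' τ
  | tcallInferredLocalS D M' X m vs md τr hmd =>
    obtain ⟨hCD, hr⟩ := wctx_unique C D _ _ hrdx (IsRedex.tcallTableR M' X m vs M' τr) hL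
    subst hCD
    have he := wctx_plug_inj _ _ _ hR
    subst hr; subst he
    exact Step.tcallInferredLocalS Mg C' M' X m vs md τr hmd
  | tcallCheckedLocalS D M' Mext X m vs md τr hmd =>
    obtain ⟨hCD, hr⟩ := wctx_unique C D _ _ hrdx
      (IsRedex.tcallTableR M' X m vs (Mext ++ M') τr) hL
    subst hCD
    have he := wctx_plug_inj _ _ _ hR
    subst hr; subst he
    exact Step.tcallCheckedLocalS Mg C' M' Mext X m vs md τr hmd
  | valCheckedS D v τ hsub =>
    obtain ⟨hCD, hr⟩ := wctx_unique C D _ _ hrdx (IsRedex.castR v τ) hL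
    subst hCD
    have he := wctx_plug_inj _ _ _ hR
    subst hr; subst he
    exact Step.valCheckedS Mg C' v τ hsub
  | valInferredS D v =>
    obtain ⟨hCD, hr⟩ := wctx_unique C D _ _ hrdx (IsRedex.inferredR v) hL
    subst hCD
    have he := wctx_plug_inj _ _ _ hR
    subst hr; subst he
    exact Step.valInferredS Mg C' v
/-- Context irrelevance: for any world contexts C and C', global tables M_g and
M'_g, redex rdx and expression e', the step ⟨M_g, C[rdx]⟩ → ⟨M'_g, C[e']⟩ holds
if and only if ⟨M_g, C'[rdx]⟩ → ⟨M'_g, C'[e']⟩ holds. -/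
theorem context_irrelevance {Ty : Type} (sub : Ty → Ty → Prop) (typeof : Val → Ty)
    (Δ : ℕ → List Val → Option Val) (substF : Expr Ty → List ℕ → List Val → Expr Ty)
    (C C' : WCtx Ty) (Mg Mg' : List (MDef Ty)) (rdx e' : Expr Ty)
    (hrdx : IsRedex rdx) :
    Step sub typeof Δ substF Mg (C.plug rdx) Mg' (C.plug e') ↔
      Step sub typeof Δ substF Mg (C'.plug rdx) Mg' (C'.plug e') :=
  ⟨step_mp sub typeof Δ substF C C' Mg Mg' rdx e' hrdx,
   step_mp sub typeof Δ substF C' C Mg Mg' rdx e' hrdx⟩
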